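/- arXiv:2010.02045 — 6 statements merged into one kernel-verified Lean document; each statement's English description precedes it below -/
import Mathlib

section
/- Let O ⊂ ℝⁿ be a compact convex body containing 0 in its interior, and let O° be its polar body. For a face F of O define F̂ = {y ∈ O° : ∀ x ∈ F, ⟨x,y⟩ = 1}. Then F̂ is an exposed face of O°, and the map F ↦ F̂ restricts to an inclusion-reversing bijection between the exposed faces of O and the exposed faces of O°, with inverse G ↦ Ĝ. -/
/-!
A nonempty exposed face `F ≠ O` of `O` is `{x ∈ O | ⟪x, w⟫ = 1}` for some `w ∈ O°`, obtained by
normalizing the exposing functional by its maximum, which is positive because `0` is an interior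
point. As `w ∈ F̂`, this gives `F̂̂ = F`. The polar `O°` again contains `0` in its interior (`O` is
bounded) and its polar is `O` (bipolar theorem), so the same argument gives `Ĝ̂ = G` for exposed
faces `G` of `O°`. Finally `F̂` is exposed by any relative interior point `x₀` of `F`: a linear
function maximal on `F` at a relative interior point is constant on `F`, so `⟪x₀, y⟫ = 1` forces
`⟪x, y⟫ = 1` for all `x ∈ F`.
-/

open RealInnerProductSpace

/-- The "hat" operation sending a face `F` of a body with polar `P` to
`F̂ = {y ∈ P : ∀ x ∈ F, ⟪x, y⟫ = 1}`. -/
noncomputable def faceHat {n : ℕ} (P F : Set (EuclideanSpace ℝ (Fin n))) :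
    Set (EuclideanSpace ℝ (Fin n)) :=
  {y ∈ P | ∀ x ∈ F, ⟪x, y⟫ = 1}

section InnerPolar

variable {E : Type*} [NormedAddCommGroup E] [InnerProductSpace ℝ E]

/-- The one-sided polar `A°`; Mathlib's `NormedSpace.polar` bounds `‖⟪x, y⟫‖` instead. -/
def innerPolar (A : Set E) : Set E :=
  {y | ∀ x ∈ A, ⟪x, y⟫ ≤ 1}

theorem zero_mem_innerPolar (A : Set E) : (0 : E) ∈ innerPolar A :=
  fun x _ => by simp

theorem zero_mem_interior_innerPolar {A : Set E} (hA : Bornology.IsBounded A) :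
    (0 : E) ∈ interior (innerPolar A) := by
  obtain ⟨R, hR, hAR⟩ := hA.subset_closedBall_lt 0 0
  refine mem_interior_iff_mem_nhds.mpr <|
    Filter.mem_of_superset (Metric.ball_mem_nhds 0 (inv_pos.mpr hR)) fun y hy x hx => ?_
  have hx : ‖x‖ ≤ R := mem_closedBall_zero_iff.mp (hAR hx)
  have hy : ‖y‖ ≤ R⁻¹ := (mem_ball_zero_iff.mp hy).le
  calc ⟪x, y⟫ ≤ ‖x‖ * ‖y‖ := real_inner_le_norm x y
    _ ≤ R * R⁻¹ := mul_le_mul hx hy (norm_nonneg _) hR.le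
    _ = 1 := mul_inv_cancel₀ hR.ne'

variable [CompleteSpace E]

theorem innerPolar_innerPolar {A : Set E} (hA : IsClosed A) (hAc : Convex ℝ A)
    (hA0 : (0 : E) ∈ A) :
    innerPolar (innerPolar A) = A := by
  refine Set.Subset.antisymm (fun z hz => ?_) fun x hx y hy => real_inner_comm x y ▸ hy x hx
  by_contra hzA
  obtain ⟨f, u, hfA, hfz⟩ := geometric_hahn_banach_closed_point hAc hA hzA
  have hu : 0 < u := by simpa using hfA 0 hA0
  set v : E := (InnerProductSpace.toDual ℝ E).symm f
  have hv : ∀ x, ⟪x, u⁻¹ • v⟫ = u⁻¹ * f x := fun x => by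
    rw [real_inner_smul_right, real_inner_comm, InnerProductSpace.toDual_symm_apply]
  have hvA : u⁻¹ • v ∈ innerPolar A := fun x hx => by
    rw [hv, inv_mul_le_iff₀ hu, mul_one]
    exact (hfA x hx).le
  have := hz _ hvA
  rw [real_inner_comm, hv, inv_mul_le_iff₀ hu, mul_one] at this
  linarith

theorem IsExposed.exists_mem_innerPolar_eq {A F : Set E} (hA0 : (0 : E) ∈ interior A)
    (hF : IsExposed ℝ A F) (hFne : F.Nonempty) (hFA : F ≠ A) :
    ∃ w ∈ innerPolar A, F = {x ∈ A | ⟪x, w⟫ = 1} := by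
  obtain ⟨l, rfl⟩ := hF hFne
  obtain ⟨x₀, hx₀A, hx₀⟩ := hFne
  have hm : 0 < l x₀ := by
    by_contra! hm
    -- otherwise `l` has a local maximum at `0`, hence vanishes and exposes all of `A`
    have hmax : IsLocalMax l 0 :=
      Filter.mem_of_superset (mem_interior_iff_mem_nhds.mp hA0) fun z hz => by
        simpa using (hx₀ z hz).trans hm
    have hl : l = 0 := hmax.hasFDerivAt_eq_zero l.hasFDerivAt
    exact hFA (by ext; simp [hl])
  set w : E := (l x₀)⁻¹ • (InnerProductSpace.toDual ℝ E).symm l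
  have hw : ∀ x, ⟪x, w⟫ = (l x₀)⁻¹ * l x := fun x => by
    rw [real_inner_smul_right, real_inner_comm, InnerProductSpace.toDual_symm_apply]
  refine ⟨w, fun x hx => ?_, ?_⟩
  · rw [hw, inv_mul_le_iff₀ hm, mul_one]
    exact hx₀ x hx
  · ext x
    simp only [Set.mem_sep_iff, hw, inv_mul_eq_one₀ hm.ne']
    exact and_congr_right fun hx =>
      ⟨fun hxmax => le_antisymm (hxmax x₀ hx₀A) (hx₀ x hx), fun h y hy => h ▸ hx₀ y hy⟩

end InnerPolar

section IntrinsicInterior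

variable {E : Type*} [NormedAddCommGroup E] [NormedSpace ℝ E]

theorem exists_pos_add_smul_sub_mem_of_mem_intrinsicInterior {F : Set E} {x₀ x : E}
    (hx₀ : x₀ ∈ intrinsicInterior ℝ F) (hx : x ∈ F) :
    ∃ t : ℝ, 0 < t ∧ x₀ + t • (x₀ - x) ∈ F := by
  obtain ⟨a, ha, rfl⟩ := hx₀
  let g : ℝ → affineSpan ℝ F := fun t =>
    ⟨t • ((a : E) - x) + a,
      (affineSpan ℝ F).smul_vsub_vadd_mem t a.2 (subset_affineSpan ℝ F hx) a.2⟩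
  have hg : Continuous g := by fun_prop
  have hg0 : g 0 = a := by ext; simp [g]
  have hnear : ∀ᶠ t in nhds 0, g t ∈ ((↑) ⁻¹' F : Set (affineSpan ℝ F)) :=
    hg.continuousAt.preimage_mem_nhds (hg0 ▸ mem_interior_iff_mem_nhds.mp ha)
  obtain ⟨t, ht, htF⟩ := ((hnear.filter_mono nhdsWithin_le_nhds).and
    self_mem_nhdsWithin).exists (f := nhdsWithin 0 (Set.Ioi 0))
  exact ⟨t, htF, by simpa [g, add_comm] using ht⟩

theorem LinearMap.eq_of_isMaxOn_of_mem_intrinsicInterior (f : E →ₗ[ℝ] ℝ) {F : Set E}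
    {x₀ x : E} (hx₀ : x₀ ∈ intrinsicInterior ℝ F) (hmax : IsMaxOn f F x₀) (hx : x ∈ F) :
    f x = f x₀ := by
  obtain ⟨t, ht, htF⟩ := exists_pos_add_smul_sub_mem_of_mem_intrinsicInterior hx₀ hx
  have h := isMaxOn_iff.mp hmax _ htF
  simp only [map_add, map_smul, map_sub, smul_eq_mul] at h
  nlinarith [isMaxOn_iff.mp hmax x hx]

end IntrinsicInterior

section FaceHat

variable {n : ℕ} {A P F : Set (EuclideanSpace ℝ (Fin n))}

theorem faceHat_empty : faceHat P ∅ = P := by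
  simp [faceHat]

theorem faceHat_eq_empty_of_zero_mem (hF : 0 ∈ F) : faceHat P F = ∅ :=
  Set.eq_empty_of_forall_notMem fun y hy => by simpa using hy.2 0 hF

theorem faceHat_antitone : Antitone (faceHat P) :=
  fun _ _ hFF' _ hy => ⟨hy.1, fun x hx => hy.2 x (hFF' hx)⟩

theorem subset_faceHat_faceHat (hFA : F ⊆ A) : F ⊆ faceHat A (faceHat P F) :=
  fun x hx => ⟨hFA hx, fun y hy => real_inner_comm x y ▸ hy.2 x hx⟩

theorem isExposed_faceHat_innerPolar (hFA : F ⊆ A) (hF : Convex ℝ F) :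
    IsExposed ℝ (innerPolar A) (faceHat (innerPolar A) F) := by
  rcases F.eq_empty_or_nonempty with rfl | hFne
  · simpa only [faceHat_empty] using IsExposed.refl (innerPolar A)
  rintro ⟨y₁, hy₁⟩
  obtain ⟨x₀, hx₀⟩ := hFne.intrinsicInterior hF
  have hx₀F := intrinsicInterior_subset hx₀
  suffices faceHat (innerPolar A) F = (innerSL ℝ x₀).toExposed (innerPolar A) from
    ⟨innerSL ℝ x₀, this⟩
  ext y
  simp only [faceHat, ContinuousLinearMap.toExposed, innerSL_apply_apply, Set.mem_sep_iff]
  refine and_congr_right fun hy =>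
    ⟨fun hyF z hz => hyF x₀ hx₀F ▸ hz x₀ (hFA hx₀F), fun hymax => ?_⟩
  have h1 : ⟪x₀, y⟫ = 1 :=
    le_antisymm (hy x₀ (hFA hx₀F)) (hy₁.2 x₀ hx₀F ▸ hymax y₁ hy₁.1)
  have hmax : IsMaxOn (innerSL ℝ y).toLinearMap F x₀ := fun z hz => by
    simpa [real_inner_comm, h1] using hy z (hFA hz)
  intro x hx
  simpa [real_inner_comm, h1] using
    (innerSL ℝ y).toLinearMap.eq_of_isMaxOn_of_mem_intrinsicInterior hx₀ hmax hx

theorem faceHat_faceHat_innerPolar (hA0 : 0 ∈ interior A) (hF : IsExposed ℝ A F) :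
    faceHat A (faceHat (innerPolar A) F) = F := by
  rcases F.eq_empty_or_nonempty with rfl | hFne
  · rw [faceHat_empty, faceHat_eq_empty_of_zero_mem (zero_mem_innerPolar A)]
  by_cases hFA : F = A
  · subst hFA
    rw [faceHat_eq_empty_of_zero_mem (interior_subset hA0), faceHat_empty]
  obtain ⟨w, hw, rfl⟩ := hF.exists_mem_innerPolar_eq hA0 hFne hFA
  have hwF : w ∈ faceHat (innerPolar A) {x ∈ A | ⟪x, w⟫ = 1} := ⟨hw, fun x hx => hx.2⟩
  exact Set.Subset.antisymm (fun x hx => ⟨hx.1, real_inner_comm w x ▸ hx.2 w hwF⟩)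
    (subset_faceHat_faceHat (Set.sep_subset _ _))

end FaceHat

/-- For a compact convex body `O ⊆ ℝⁿ` with `0` in its interior and polar body
`O° = {y : ∀ x ∈ O, ⟪x,y⟫ ≤ 1}`, the map `F ↦ F̂` sends exposed faces of `O` to
exposed faces of `O°`, is inclusion-reversing, and is an involution (hence a
bijection between the exposed faces of `O` and those of `O°`). -/
theorem polar_exposed_face_duality {n : ℕ} (O : Set (EuclideanSpace ℝ (Fin n)))
    (hOcpt : IsCompact O) (hOconv : Convex ℝ O) (hO0 : (0 : EuclideanSpace ℝ (Fin n)) ∈ interior O)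
    (Opolar : Set (EuclideanSpace ℝ (Fin n)))
    (hpolar : Opolar = {y | ∀ x ∈ O, ⟪x, y⟫ ≤ 1}) :
    (∀ F, IsExposed ℝ O F → IsExposed ℝ Opolar (faceHat Opolar F)) ∧
    (∀ F F', IsExposed ℝ O F → IsExposed ℝ O F' → F ⊆ F' →
      faceHat Opolar F' ⊆ faceHat Opolar F) ∧
    (∀ F, IsExposed ℝ O F → faceHat O (faceHat Opolar F) = F) ∧
    (∀ G, IsExposed ℝ Opolar G → faceHat Opolar (faceHat O G) = G) := by
  obtain rfl : Opolar = innerPolar O := hpolar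
  have hbipolar : innerPolar (innerPolar O) = O :=
    innerPolar_innerPolar hOcpt.isClosed hOconv (interior_subset hO0)
  refine ⟨fun F hF => isExposed_faceHat_innerPolar hF.subset (hF.convex hOconv),
    fun F F' _ _ hFF' => faceHat_antitone hFF', fun F hF => faceHat_faceHat_innerPolar hO0 hF,
    fun G hG => ?_⟩
  simpa only [hbipolar] using
    faceHat_faceHat_innerPolar (zero_mem_interior_innerPolar hOcpt.isBounded) hG
end

section
/- Let W be a finite group acting linearly on a finite-dimensional real inner product space 𝔞, let x ∈ 𝔞, let P_x = conv(W·x), let Q be a face of P_x, and let y ∈ P_x be such that P_y = conv(W·y) intersects Q nontrivially. Then there exists w ∈ W with w·y ∈ Q. -/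
/-! The part of a convex set outside one of its faces is convex, so if all `W`-translates of `y`
avoided the face `Q`, then so would their convex hull `P_y ⊆ P_x`. -/

theorem IsExtreme.inter_nonempty_of_convexHull_inter_nonempty {𝕜 E : Type*} [Field 𝕜]
    [LinearOrder 𝕜] [IsStrictOrderedRing 𝕜] [AddCommGroup E] [Module 𝕜 E] {A B t : Set E}
    (hA : Convex 𝕜 A) (hAB : IsExtreme 𝕜 A B) (htA : t ⊆ A)
    (h : (convexHull 𝕜 t ∩ B).Nonempty) : (t ∩ B).Nonempty := by
  by_contra! htB
  have ht : t ⊆ A \ B := fun z hz => ⟨htA hz, fun hzB => htB.subset ⟨hz, hzB⟩⟩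
  obtain ⟨z, hzt, hzB⟩ := h
  exact (convexHull_min ht (hAB.convex_sdiff hA) hzt).2 hzB

theorem exists_translate_mem_face_general
    {𝔞 : Type*} [NormedAddCommGroup 𝔞] [InnerProductSpace ℝ 𝔞]
    {W : Type*} [Group W]
    (σ : W →* (𝔞 ≃ₗ[ℝ] 𝔞)) (x y : 𝔞) (Q : Set 𝔞)
    (hQ : IsExtreme ℝ (convexHull ℝ (Set.range fun w => σ w x)) Q)
    (hPy : convexHull ℝ (Set.range fun w => σ w y) ⊆
      convexHull ℝ (Set.range fun w => σ w x))
    (hmeet : (convexHull ℝ (Set.range fun w => σ w y) ∩ Q).Nonempty) :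
    ∃ w : W, σ w y ∈ Q := by
  have htranslates : (Set.range fun w => σ w y) ⊆ convexHull ℝ (Set.range fun w => σ w x) :=
    (subset_convexHull ℝ _).trans hPy
  obtain ⟨_, ⟨w, rfl⟩, hw⟩ :=
    hQ.inter_nonempty_of_convexHull_inter_nonempty (convex_convexHull ℝ _) htranslates hmeet
  exact ⟨w, hw⟩

/-- Let `W` be a finite group acting linearly on a finite-dimensional real inner
product space `𝔞`, let `x ∈ 𝔞`, `P_x = conv (W·x)`, let `Q` be a face of `P_x`
(an extreme subset), and let `y ∈ P_x` with `P_y ⊆ P_x` be such that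
`P_y = conv (W·y)` meets `Q`. Then some `W`-translate of `y` lies in `Q`. -/
theorem exists_translate_mem_face
    {𝔞 : Type*} [NormedAddCommGroup 𝔞] [InnerProductSpace ℝ 𝔞] [FiniteDimensional ℝ 𝔞]
    {W : Type*} [Group W] [Finite W]
    (σ : W →* (𝔞 ≃ₗ[ℝ] 𝔞)) (x y : 𝔞) (Q : Set 𝔞)
    (hQ : IsExtreme ℝ (convexHull ℝ (Set.range fun w => σ w x)) Q)
    (hy : y ∈ convexHull ℝ (Set.range fun w => σ w x))
    (hPy : convexHull ℝ (Set.range fun w => σ w y) ⊆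
      convexHull ℝ (Set.range fun w => σ w x))
    (hmeet : (convexHull ℝ (Set.range fun w => σ w y) ∩ Q).Nonempty) :
    ∃ w : W, σ w y ∈ Q :=
  exists_translate_mem_face_general σ x y Q hQ hPy hmeet
end

section
/- Let V be a finite-dimensional real inner product space, K a compact group acting on V by linear isometries, 𝔞 ⊆ V a linear subspace meeting every K-orbit, and π : V → 𝔞 the orthogonal projection. Suppose that for every x ∈ 𝔞 one has π(K·x) = conv(W·x) for a fixed finite group W of isometries of 𝔞 with W·x ⊆ K·x. Then for every x ∈ 𝔞, conv(K·x) ∩ 𝔞 = conv(W·x). -/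
/-!
A point `y ∈ conv (K·x)` lying in `𝔞` is fixed by `π`, so `y ∈ π (conv (K·x)) = conv (π (K·x))`,
and `π (K·x) = conv (W·x)` is already convex. Conversely `W·x ⊆ K·x` gives
`conv (W·x) ⊆ conv (K·x)`.
-/

open Set

theorem Submodule.convexHull_inter_subset_image_of_retraction
    {𝕜 E : Type*} [Field 𝕜] [LinearOrder 𝕜] [IsStrictOrderedRing 𝕜] [AddCommGroup E] [Module 𝕜 E]
    {p : Submodule 𝕜 E} (f : E →ₗ[𝕜] p) (hf : ∀ y : p, f y = y) {s : Set E}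
    (hs : Convex 𝕜 (f '' s)) :
    convexHull 𝕜 s ∩ p ⊆ (↑) '' (f '' s) := by
  rintro y ⟨hy, hyp⟩
  have hfy : f y ∈ f '' s := by
    rw [← hs.convexHull_eq, ← f.image_convexHull]
    exact mem_image_of_mem f hy
  exact ⟨f y, hfy, congrArg Subtype.val (hf ⟨y, hyp⟩)⟩

theorem orbitope_inter_cartan_eq_momentum_polytope_general
    {V : Type*} [NormedAddCommGroup V] [InnerProductSpace ℝ V] [FiniteDimensional ℝ V]
    {K : Type*} [Group K] (ρ : K →* (V ≃ₗᵢ[ℝ] V))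
    (𝔞 : Submodule ℝ V)
    {W : Type*} [Group W] (σ : W →* (𝔞 ≃ₗᵢ[ℝ] 𝔞))
    (hWK : ∀ (x : 𝔞) (w : W), ∃ g : K, ρ g (x : V) = (σ w x : V))
    (hKostant : ∀ x : 𝔞,
      (Submodule.orthogonalProjectionOnto 𝔞) '' (Set.range fun g : K => ρ g (x : V)) =
        convexHull ℝ (Set.range fun w : W => σ w x)) :
    ∀ x : 𝔞,
      convexHull ℝ (Set.range fun g : K => ρ g (x : V)) ∩ (𝔞 : Set V) =
        Subtype.val '' (convexHull ℝ (Set.range fun w : W => σ w x)) := by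
  intro x
  refine Subset.antisymm ?_ (subset_inter ?_ ?_)
  · rw [← hKostant x]
    exact Submodule.convexHull_inter_subset_image_of_retraction
      (𝔞.orthogonalProjectionOnto : V →ₗ[ℝ] 𝔞) 𝔞.orthogonalProjectionOnto_mem_subspace_eq_self
      (hKostant x ▸ convex_convexHull ℝ _)
  · have hWx : Subtype.val '' range (fun w : W => σ w x) ⊆ range fun g : K => ρ g (x : V) := by
      rintro _ ⟨_, ⟨w, rfl⟩, rfl⟩
      exact hWK x w
    have hhull := 𝔞.subtype.image_convexHull (range fun w : W => σ w x)
    rw [Submodule.coe_subtype] at hhull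
    exact hhull ▸ convexHull_mono hWx
  · rintro _ ⟨z, -, rfl⟩
    exact z.2

/-- Abstract Kostant convexity setting: `K` acts on a finite-dimensional real inner
product space `V` by linear isometries, `𝔞 ⊆ V` is a subspace meeting every
`K`-orbit, `π` is the orthogonal projection onto `𝔞`, and `W` is a finite group of
linear isometries of `𝔞` with `W·x ⊆ K·x` and `π(K·x) = conv (W·x)` for all
`x ∈ 𝔞`. Then `conv (K·x) ∩ 𝔞 = conv (W·x)` for every `x ∈ 𝔞`. -/
theorem orbitope_inter_cartan_eq_momentum_polytope
    {V : Type*} [NormedAddCommGroup V] [InnerProductSpace ℝ V] [FiniteDimensional ℝ V]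
    {K : Type*} [Group K] (ρ : K →* (V ≃ₗᵢ[ℝ] V))
    (𝔞 : Submodule ℝ V)
    {W : Type*} [Group W] [Finite W] (σ : W →* (𝔞 ≃ₗᵢ[ℝ] 𝔞))
    (hmeets : ∀ v : V, ∃ g : K, ρ g v ∈ 𝔞)
    (hWK : ∀ (x : 𝔞) (w : W), ∃ g : K, ρ g (x : V) = (σ w x : V))
    (hKostant : ∀ x : 𝔞,
      (Submodule.orthogonalProjectionOnto 𝔞) '' (Set.range fun g : K => ρ g (x : V)) =
        convexHull ℝ (Set.range fun w : W => σ w x)) :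
    ∀ x : 𝔞,
      convexHull ℝ (Set.range fun g : K => ρ g (x : V)) ∩ (𝔞 : Set V) =
        Subtype.val '' (convexHull ℝ (Set.range fun w : W => σ w x)) :=
  orbitope_inter_cartan_eq_momentum_polytope_general ρ 𝔞 σ hWK hKostant
end

section
/- With the same hypotheses as in the abstract Kostant setting (π(K·x) = conv(W·x) and W·x ⊆ K·x for all x ∈ 𝔞, and 𝔞 meets every K-orbit), any two elements x, y ∈ 𝔞 that are K-conjugate are W-conjugate. -/
/-! Since `K` acts by isometries, `y = π(g·x)` lies in `conv (W·x)` and has the same norm as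
every point of `W·x`. In a strictly convex space the sphere consists of extreme points of the
closed ball, hence `y` is an extreme point of `conv (W·x)`, and such points lie in `W·x`. -/

open Metric Set

lemma mem_of_mem_convexHull_of_subset_sphere {E : Type*} [NormedAddCommGroup E]
    [NormedSpace ℝ E] [StrictConvexSpace ℝ E] {S : Set E} {a y : E} {r : ℝ}
    (hS : S ⊆ sphere a r) (hy : y ∈ convexHull ℝ S) (hyr : y ∈ sphere a r) : y ∈ S := by
  have hconv : convexHull ℝ S ⊆ closedBall a r :=
    convexHull_min (hS.trans sphere_subset_closedBall) (convex_closedBall a r)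
  have hext : y ∈ extremePoints ℝ (closedBall a r) := by
    rcases eq_or_ne r 0 with rfl | hr
    · rw [sphere_zero, mem_singleton_iff] at hyr
      simp [hyr]
    · exact StrictConvexSpace.sphere_subset_extremePoints_closedBall a hr hyr
  exact extremePoints_convexHull_subset
    (inter_extremePoints_subset_extremePoints_of_subset hconv ⟨hy, hext⟩)

theorem k_conjugate_imp_w_conjugate_general
    {V : Type*} [NormedAddCommGroup V] [InnerProductSpace ℝ V] [FiniteDimensional ℝ V]
    {K : Type*} [Group K] (ρ : K →* (V ≃ₗᵢ[ℝ] V))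
    (𝔞 : Submodule ℝ V)
    {W : Type*} [Group W] (σ : W →* (𝔞 ≃ₗᵢ[ℝ] 𝔞))
    (hKostant : ∀ x : 𝔞,
      (𝔞.orthogonalProjectionOnto) '' (Set.range fun g : K => ρ g (x : V)) =
        convexHull ℝ (Set.range fun w : W => σ w x))
    (x y : 𝔞) (g : K) (hconj : ρ g (x : V) = (y : V)) :
    ∃ w : W, σ w x = y := by
  have hy : y ∈ convexHull ℝ (range fun w : W => σ w x) := by
    rw [← hKostant x]
    exact ⟨y, ⟨g, hconj⟩, Submodule.orthogonalProjectionOnto_mem_subspace_eq_self y⟩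
  have hyx : ‖y‖ = ‖x‖ := by
    rw [← Submodule.norm_coe, ← hconj, LinearIsometryEquiv.norm_map, Submodule.norm_coe]
  have horbit : range (fun w : W => σ w x) ⊆ sphere 0 ‖x‖ := by
    rintro _ ⟨w, rfl⟩
    simp
  obtain ⟨w, hw⟩ := mem_of_mem_convexHull_of_subset_sphere horbit hy (by simpa using hyx)
  exact ⟨w, hw⟩

/-- In the abstract Kostant setting (`π(K·x) = conv (W·x)` and `W·x ⊆ K·x` for all
`x ∈ 𝔞`, and `𝔞` meets every `K`-orbit), any two elements of `𝔞` that are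
`K`-conjugate are already `W`-conjugate. -/
theorem k_conjugate_imp_w_conjugate
    {V : Type*} [NormedAddCommGroup V] [InnerProductSpace ℝ V] [FiniteDimensional ℝ V]
    {K : Type*} [Group K] (ρ : K →* (V ≃ₗᵢ[ℝ] V))
    (𝔞 : Submodule ℝ V)
    {W : Type*} [Group W] [Finite W] (σ : W →* (𝔞 ≃ₗᵢ[ℝ] 𝔞))
    (hmeets : ∀ v : V, ∃ g : K, ρ g v ∈ 𝔞)
    (hWK : ∀ (x : 𝔞) (w : W), ∃ g : K, ρ g (x : V) = (σ w x : V))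
    (hKostant : ∀ x : 𝔞,
      (𝔞.orthogonalProjectionOnto) '' (Set.range fun g : K => ρ g (x : V)) =
        convexHull ℝ (Set.range fun w : W => σ w x))
    (x y : 𝔞) (g : K) (hconj : ρ g (x : V) = (y : V)) :
    ∃ w : W, σ w x = y :=
  k_conjugate_imp_w_conjugate_general ρ 𝔞 σ hKostant x y g hconj
end

section
/- Let A be an irreducible Cartan matrix (of a finite-type root system). Then all entries of A⁻¹ are strictly positive. Consequently, for simple roots β₁,…,β_n of an irreducible finite root system with fundamental coweights μ₁,…,μ_n (⟨β_i, μ_j⟩ = δ_{ij}), every nonzero x in the closed Weyl chamber C satisfies μ_i(x) > 0 for all i. -/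
/-!
Write `x = ∑ cₗ βₗ` in the basis of simple roots; by duality `cᵢ = ⟪μᵢ, x⟫`. If `x` lies in the
chamber, splitting `c = c⁺ - c⁻` gives `⟪v, x⟫ ≥ 0` and `⟪v, ∑ c⁺ β⟫ ≤ 0` for `v = ∑ c⁻ β`
(the roots are pairwise obtuse), so `⟪v, v⟫ ≤ 0` and `c ≥ 0`. For `l` outside the support of
`c`, the nonpositive terms of `⟪βₗ, x⟫ = ∑ₖ cₖ ⟪βₗ, βₖ⟫ ≥ 0` all vanish, so the support is
orthogonal to its complement, hence is everything by irreducibility unless `x = 0`.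
Applied to `x = μⱼ` this makes the Gram matrix of the coweights entrywise positive, and
`μⱼ = ∑ₖ ⟪μₖ, μⱼ⟫ βₖ` shows `A⁻¹ₖⱼ = ⟪βₖ, βₖ⟫ / 2 · ⟪μₖ, μⱼ⟫`.
-/

open RealInnerProductSpace

section ObtuseFamily

variable {E ι : Type*} [NormedAddCommGroup E] [InnerProductSpace ℝ E] [Fintype ι] {β : ι → E}

lemma inner_sum_smul_nonpos_of_mul_eq_zero (hobtuse : ∀ i j, i ≠ j → ⟪β i, β j⟫ ≤ 0)
    {a b : ι → ℝ} (ha : 0 ≤ a) (hb : 0 ≤ b) (hab : ∀ k, a k * b k = 0) :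
    ⟪∑ k, a k • β k, ∑ l, b l • β l⟫ ≤ 0 := by
  simp_rw [sum_inner, inner_sum, real_inner_smul_left, real_inner_smul_right]
  refine Finset.sum_nonpos fun k _ => Finset.sum_nonpos fun l _ => ?_
  obtain rfl | hkl := eq_or_ne k l
  · rw [← mul_assoc, hab, zero_mul]
  · exact mul_nonpos_of_nonneg_of_nonpos (ha k)
      (mul_nonpos_of_nonneg_of_nonpos (hb l) (hobtuse k l hkl))

lemma nonneg_of_inner_sum_smul_nonneg (hindep : LinearIndependent ℝ β)
    (hobtuse : ∀ i j, i ≠ j → ⟪β i, β j⟫ ≤ 0) {c : ι → ℝ}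
    (hc : ∀ k, 0 ≤ ⟪β k, ∑ l, c l • β l⟫) : 0 ≤ c := by
  set v := ∑ l, (c l)⁻ • β l
  have hsplit : ∑ l, c l • β l = ∑ l, (c l)⁺ • β l - v := by
    simp_rw [v, ← Finset.sum_sub_distrib, ← sub_smul, posPart_sub_negPart]
  have hv_inner : 0 ≤ ⟪v, ∑ l, c l • β l⟫ := by
    rw [sum_inner]
    exact Finset.sum_nonneg fun l _ => by
      rw [real_inner_smul_left]; exact mul_nonneg (negPart_nonneg _) (hc l)
  have hcross : ⟪v, ∑ l, (c l)⁺ • β l⟫ ≤ 0 :=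
    inner_sum_smul_nonpos_of_mul_eq_zero hobtuse (fun _ => negPart_nonneg _)
      (fun _ => posPart_nonneg _) fun k => by
        rcases le_total 0 (c k) with h | h
        · simp [negPart_eq_zero.mpr h]
        · simp [posPart_eq_zero.mpr h]
  have hv : v = 0 := by
    rw [hsplit, inner_sub_right] at hv_inner
    exact inner_self_eq_zero.mp (le_antisymm (by linarith) real_inner_self_nonneg)
  intro k
  simpa [negPart_eq_zero] using Fintype.linearIndependent_iff.mp hindep _ hv k

lemma inner_eq_zero_of_mem_support_of_notMem_support (hobtuse : ∀ i j, i ≠ j → ⟪β i, β j⟫ ≤ 0)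
    {c : ι → ℝ} (hc0 : 0 ≤ c) (hc : ∀ k, 0 ≤ ⟪β k, ∑ l, c l • β l⟫) {k l : ι}
    (hk : c k ≠ 0) (hl : c l = 0) : ⟪β k, β l⟫ = 0 := by
  have hterms : ∀ m ∈ Finset.univ, c m * ⟪β l, β m⟫ ≤ 0 := fun m _ => by
    obtain rfl | hml := eq_or_ne m l
    · rw [hl, zero_mul]
    · exact mul_nonpos_of_nonneg_of_nonpos (hc0 m) (hobtuse l m hml.symm)
  have hsum : ∑ m, c m * ⟪β l, β m⟫ = 0 := by
    refine le_antisymm (Finset.sum_nonpos hterms) ?_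
    simpa only [inner_sum, real_inner_smul_right] using hc l
  have hkl := (Finset.sum_eq_zero_iff_of_nonpos hterms).mp hsum k (Finset.mem_univ k)
  rw [real_inner_comm]
  exact (mul_eq_zero.mp hkl).resolve_left hk

lemma pos_of_inner_sum_smul_nonneg (hindep : LinearIndependent ℝ β)
    (hobtuse : ∀ i j, i ≠ j → ⟪β i, β j⟫ ≤ 0)
    (hirr : ∀ S : Set ι, (∀ i ∈ S, ∀ j ∉ S, ⟪β i, β j⟫ = 0) → S = ∅ ∨ S = Set.univ)
    {c : ι → ℝ} (hc : ∀ k, 0 ≤ ⟪β k, ∑ l, c l • β l⟫) (hc_ne : c ≠ 0) (k : ι) : 0 < c k := by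
  have hc0 := nonneg_of_inner_sum_smul_nonneg hindep hobtuse hc
  rcases hirr {l | c l ≠ 0} fun i hi j hj =>
      inner_eq_zero_of_mem_support_of_notMem_support hobtuse hc0 hc hi (not_not.mp hj) with
    h | h
  · exact absurd (funext fun l => not_not.mp (Set.eq_empty_iff_forall_notMem.mp h l)) hc_ne
  · exact (hc0 k).lt_of_ne (Set.eq_univ_iff_forall.mp h k).symm

end ObtuseFamily

section Coweights

variable {E ι : Type*} [NormedAddCommGroup E] [InnerProductSpace ℝ E] [Fintype ι] [DecidableEq ι]
  {β μ : ι → E}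

lemma inner_sum_smul_of_dual (hdual : ∀ i j, ⟪β i, μ j⟫ = if i = j then (1 : ℝ) else 0)
    (c : ι → ℝ) (i : ι) : ⟪μ i, ∑ l, c l • β l⟫ = c i := by
  simp [sum_inner, real_inner_smul_left, ← real_inner_comm (μ i), hdual]

lemma sum_inner_smul_of_dual (hspan : Submodule.span ℝ (Set.range β) = ⊤)
    (hdual : ∀ i j, ⟪β i, μ j⟫ = if i = j then (1 : ℝ) else 0) (x : E) :
    ∑ l, ⟪μ l, x⟫ • β l = x := by
  have hx : x ∈ Submodule.span ℝ (Set.range β) := hspan ▸ Submodule.mem_top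
  obtain ⟨c, rfl⟩ := (Submodule.mem_span_range_iff_exists_fun ℝ).mp hx
  simp_rw [inner_sum_smul_of_dual hdual]

lemma coweight_inner_pos (hindep : LinearIndependent ℝ β)
    (hspan : Submodule.span ℝ (Set.range β) = ⊤) (hobtuse : ∀ i j, i ≠ j → ⟪β i, β j⟫ ≤ 0)
    (hdual : ∀ i j, ⟪β i, μ j⟫ = if i = j then (1 : ℝ) else 0)
    (hirr : ∀ S : Set ι, (∀ i ∈ S, ∀ j ∉ S, ⟪β i, β j⟫ = 0) → S = ∅ ∨ S = Set.univ)
    {x : E} (hx : ∀ j, 0 ≤ ⟪β j, x⟫) (hx0 : x ≠ 0) (i : ι) : 0 < ⟪μ i, x⟫ := by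
  have hrepr := sum_inner_smul_of_dual hspan hdual x
  refine pos_of_inner_sum_smul_nonneg hindep hobtuse hirr (c := fun l => ⟪μ l, x⟫)
    (by rwa [hrepr]) (fun h => hx0 ?_) i
  rw [← hrepr]
  simp [fun l => congrFun h l]

lemma coweight_inner_coweight_pos (hindep : LinearIndependent ℝ β)
    (hspan : Submodule.span ℝ (Set.range β) = ⊤) (hobtuse : ∀ i j, i ≠ j → ⟪β i, β j⟫ ≤ 0)
    (hdual : ∀ i j, ⟪β i, μ j⟫ = if i = j then (1 : ℝ) else 0)
    (hirr : ∀ S : Set ι, (∀ i ∈ S, ∀ j ∉ S, ⟪β i, β j⟫ = 0) → S = ∅ ∨ S = Set.univ)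
    (i j : ι) : 0 < ⟪μ i, μ j⟫ := by
  refine coweight_inner_pos hindep hspan hobtuse hdual hirr (fun l => ?_) (fun h => ?_) i
  · rw [hdual]; split_ifs <;> norm_num
  · simpa [h] using hdual j j

lemma cartan_mul_coweight_gram_eq_one (hspan : Submodule.span ℝ (Set.range β) = ⊤)
    (hdual : ∀ i j, ⟪β i, μ j⟫ = if i = j then (1 : ℝ) else 0) (hβ : ∀ k, β k ≠ 0) :
    (Matrix.of fun i j => 2 * ⟪β i, β j⟫ / ⟪β j, β j⟫) *
      (Matrix.of fun k j => ⟪β k, β k⟫ / 2 * ⟪μ k, μ j⟫) = 1 := by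
  ext i j
  have hterm : ∀ k, 2 * ⟪β i, β k⟫ / ⟪β k, β k⟫ * (⟪β k, β k⟫ / 2 * ⟪μ k, μ j⟫) =
      ⟪β i, ⟪μ k, μ j⟫ • β k⟫ := fun k => by
    have : ⟪β k, β k⟫ ≠ 0 := inner_self_ne_zero.mpr (hβ k)
    rw [real_inner_smul_right]
    field_simp
  simp only [Matrix.mul_apply, Matrix.of_apply, hterm, ← inner_sum,
    sum_inner_smul_of_dual hspan hdual, hdual, Matrix.one_apply]

end Coweights

theorem cartan_inverse_pos_and_coweights_pos_general
    {𝔞 : Type*} [NormedAddCommGroup 𝔞] [InnerProductSpace ℝ 𝔞]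
    {n : ℕ} (β μ : Fin n → 𝔞)
    (hindep : LinearIndependent ℝ β)
    (hspan : Submodule.span ℝ (Set.range β) = ⊤)
    (hobtuse : ∀ i j, i ≠ j → ⟪β i, β j⟫ ≤ 0)
    (hdual : ∀ i j, ⟪β i, μ j⟫ = if i = j then (1 : ℝ) else 0)
    (hirr : ∀ S : Set (Fin n), (∀ i ∈ S, ∀ j ∉ S, ⟪β i, β j⟫ = 0) →
      S = ∅ ∨ S = Set.univ)
    (A : Matrix (Fin n) (Fin n) ℝ)
    (hA : A = Matrix.of fun i j => 2 * ⟪β i, β j⟫ / ⟪β j, β j⟫) :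
    IsUnit A.det ∧ (∀ i j, 0 < A⁻¹ i j) ∧
      (∀ x : 𝔞, (∀ j, 0 ≤ ⟪β j, x⟫) → x ≠ 0 → ∀ i, 0 < ⟪μ i, x⟫) := by
  have hAB := hA ▸ cartan_mul_coweight_gram_eq_one hspan hdual hindep.ne_zero
  refine ⟨Matrix.isUnit_det_of_right_inverse hAB, fun i j => ?_,
    fun x hx hx0 => coweight_inner_pos hindep hspan hobtuse hdual hirr hx hx0⟩
  rw [Matrix.inv_eq_right_inv hAB, Matrix.of_apply]
  have hβ : 0 < ⟪β i, β i⟫ := real_inner_self_pos.mpr (hindep.ne_zero i)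
  exact mul_pos (half_pos hβ) (coweight_inner_coweight_pos hindep hspan hobtuse hdual hirr i j)

/-- Let `β 1, …, β n` be the simple roots of an irreducible finite root system in a
Euclidean space (linearly independent, spanning, pairwise obtuse, with connected
Dynkin graph), with Cartan matrix `A i j = 2⟪β i, β j⟫/⟪β j, β j⟫` and fundamental
coweights `μ 1, …, μ n` (`⟪β i, μ j⟫ = δ_{ij}`). Then `A` is invertible with all
entries of `A⁻¹` strictly positive, and every nonzero `x` in the closed Weyl
chamber (`⟪β j, x⟫ ≥ 0` for all `j`) satisfies `⟪μ i, x⟫ > 0` for all `i`. -/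
theorem cartan_inverse_pos_and_coweights_pos
    {𝔞 : Type*} [NormedAddCommGroup 𝔞] [InnerProductSpace ℝ 𝔞] [FiniteDimensional ℝ 𝔞]
    {n : ℕ} (β μ : Fin n → 𝔞)
    (hindep : LinearIndependent ℝ β)
    (hspan : Submodule.span ℝ (Set.range β) = ⊤)
    (hobtuse : ∀ i j, i ≠ j → ⟪β i, β j⟫ ≤ 0)
    (hdual : ∀ i j, ⟪β i, μ j⟫ = if i = j then (1 : ℝ) else 0)
    (hirr : ∀ S : Set (Fin n), (∀ i ∈ S, ∀ j ∉ S, ⟪β i, β j⟫ = 0) →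
      S = ∅ ∨ S = Set.univ)
    (A : Matrix (Fin n) (Fin n) ℝ)
    (hA : A = Matrix.of fun i j => 2 * ⟪β i, β j⟫ / ⟪β j, β j⟫) :
    IsUnit A.det ∧ (∀ i j, 0 < A⁻¹ i j) ∧
      (∀ x : 𝔞, (∀ j, 0 ≤ ⟪β j, x⟫) → x ≠ 0 → ∀ i, 0 < ⟪μ i, x⟫) :=
  cartan_inverse_pos_and_coweights_pos_general β μ hindep hspan hobtuse hdual hirr A hA
end

section
/- For m ≥ n, 1 ≤ k ≤ n, the unit ball of the k-th Ky Fan norm on M_{m×n}(ℝ) is a spectrahedron: B_k = {x ∈ M_{m×n}(ℝ) : Λᵏ(x̂) ⪯ I}, where x̂ = [[0,x],[xᵀ,0]] and Λᵏ denotes the derivation action on the k-th exterior power of ℝ^{m+n}. -/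
open Polynomial Matrix

/-- The `k`-th Ky Fan norm of a real `m × n` matrix: the sum of its `k` largest
singular values. -/
noncomputable def kyFanNorm {m n : ℕ} (k : ℕ) (x : Matrix (Fin m) (Fin n) ℝ) : ℝ :=
  sSup {t | ∃ s : Finset (Fin n), s.card = k ∧
    t = ∑ i ∈ s, Real.sqrt ((Matrix.isHermitian_conjTranspose_mul_self x).eigenvalues i)}

/-- The `k`-th multiplicative compound of a square matrix: the matrix of `⋀ᵏ M` in
the standard basis, with entries the `k × k` minors of `M`. -/
noncomputable def multCompound {R : Type*} [CommRing R] (k N : ℕ)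
    (M : Matrix (Fin N) (Fin N) R) :
    Matrix {s : Finset (Fin N) // s.card = k} {s : Finset (Fin N) // s.card = k} R :=
  fun S T => (M.submatrix (fun i => ((S.1.orderIsoOfFin S.2 i : Fin N)))
    (fun i => ((T.1.orderIsoOfFin T.2 i : Fin N)))).det

/-- The `k`-th additive compound `Λᵏ(M)`: the matrix of the derivation action of
`M` on the `k`-th exterior power, the coefficient of `t` in the multiplicative
compound of `1 + t M`. -/
noncomputable def addCompound {R : Type*} [CommRing R] (k N : ℕ)
    (M : Matrix (Fin N) (Fin N) R) :
    Matrix {s : Finset (Fin N) // s.card = k} {s : Finset (Fin N) // s.card = k} R :=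
  fun S T => ((multCompound k N ((X : R[X]) • M.map C + 1)) S T).coeff 1

/-!
Diagonalise `x̂ = U D Uᵀ` with `U` orthogonal. The multiplicative compound is the matrix of `⋀ᵏ`,
hence multiplicative, so `Λᵏ(x̂) = Cᵏ(U) Λᵏ(D) Cᵏ(U)ᵀ` with `Cᵏ(U)` orthogonal, and `Λᵏ(D)` is
diagonal with the `k`-fold sums of eigenvalues of `x̂` on the diagonal. Thus `Λᵏ(x̂) ⪯ I` iff every
sum of `k` eigenvalues of `x̂` is at most `1`. Multiplying `X - x̂` by a block triangular matrix
shows `χ_x̂ = X^(m-n) χ_{xᵀx}(X²)`, so the eigenvalues of `x̂` are `±σᵢ(x)` and `m - n` zeros; as the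
`σᵢ(x)` are nonnegative, the largest `k`-fold sums use only them.
-/

section Compound

variable {R : Type*} [CommRing R] {k N : ℕ}

def powersetCardEquiv (α : Type*) (k : ℕ) :
    {s : Finset α // s.card = k} ≃ Set.powersetCard α k :=
  Equiv.subtypeEquivRight fun _ => Set.powersetCard.mem_iff.symm

open exteriorPower in
theorem multCompound_eq_toMatrix_exteriorPower_map (M : Matrix (Fin N) (Fin N) R) :
    multCompound k N M =
      (LinearMap.toMatrix ((Pi.basisFun R (Fin N)).exteriorPower k)
        ((Pi.basisFun R (Fin N)).exteriorPower k) (map k (toLin' M))).submatrix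
        (powersetCardEquiv (Fin N) k) (powersetCardEquiv (Fin N) k) := by
  ext S T
  rw [submatrix_apply, LinearMap.toMatrix_apply, basis_apply, map_apply_ιMulti_family,
    basis_repr_apply, ιMulti_family, ιMultiDual_apply_ιMulti, multCompound, ← det_transpose]
  congr 1
  ext i j
  simp [powersetCardEquiv, Set.powersetCard.ofFinEmbEquiv_symm_apply,
    Finset.coe_orderIsoOfFin_apply]

theorem multCompound_mul (A B : Matrix (Fin N) (Fin N) R) :
    multCompound k N (A * B) = multCompound k N A * multCompound k N B := by
  simp only [multCompound_eq_toMatrix_exteriorPower_map, toLin'_mul, exteriorPower.map_comp,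
    LinearMap.toMatrix_comp _ ((Pi.basisFun R (Fin N)).exteriorPower k), submatrix_mul_equiv]

theorem multCompound_one : multCompound k N (1 : Matrix (Fin N) (Fin N) R) = 1 := by
  rw [multCompound_eq_toMatrix_exteriorPower_map, toLin'_one, exteriorPower.map_id,
    LinearMap.toMatrix_id, submatrix_one_equiv]

theorem multCompound_map {S : Type*} [CommRing S] (f : R →+* S) (M : Matrix (Fin N) (Fin N) R) :
    multCompound k N (M.map f) = (multCompound k N M).map f := by
  ext S T
  simp [multCompound, ← submatrix_map, RingHom.map_det]

theorem multCompound_transpose (M : Matrix (Fin N) (Fin N) R) :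
    multCompound k N Mᵀ = (multCompound k N M)ᵀ := by
  ext S T
  simp [multCompound, ← transpose_submatrix]

theorem multCompound_diagonal (d : Fin N → R) :
    multCompound k N (diagonal d) = diagonal fun S => ∏ i ∈ S.1, d i := by
  ext S T
  rcases eq_or_ne S T with rfl | hST
  · rw [diagonal_apply_eq, multCompound, submatrix_diagonal d (fun i => S.1.orderIsoOfFin S.2 i)
      (Subtype.val_injective.comp (S.1.orderIsoOfFin S.2).injective), det_diagonal]
    exact ((S.1.orderIsoOfFin S.2).toEquiv.prod_comp (fun i => d i)).trans (S.1.prod_coe_sort d)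
  · obtain ⟨a, haT, haS⟩ : ∃ a ∈ T.1, a ∉ S.1 := Finset.not_subset.mp fun hTS =>
      hST (Subtype.ext (Finset.eq_of_subset_of_card_le hTS (by rw [S.2, T.2])).symm)
    rw [diagonal_apply_ne _ hST, multCompound]
    refine det_eq_zero_of_column_eq_zero ((T.1.orderIsoOfFin T.2).symm ⟨a, haT⟩) fun i => ?_
    rw [submatrix_apply, OrderIso.apply_symm_apply]
    exact diagonal_apply_ne _ fun h => haS (by simpa [h] using (S.1.orderIsoOfFin S.2 i).2)

theorem addCompound_eq_coeff_matPolyEquiv (M : Matrix (Fin N) (Fin N) R) :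
    addCompound k N M = (matPolyEquiv (multCompound k N ((X : R[X]) • M.map C + 1))).coeff 1 := by
  ext S T
  rw [matPolyEquiv_coeff_apply, addCompound]

theorem addCompound_conj (U D V : Matrix (Fin N) (Fin N) R) (hUV : U * V = 1) :
    addCompound k N (U * D * V) =
      multCompound k N U * addCompound k N D * multCompound k N V := by
  have hlift : (X : R[X]) • (U * D * V).map C + 1 =
      U.map C * ((X : R[X]) • D.map C + 1) * V.map C := by
    rw [Matrix.mul_add, Matrix.add_mul, Matrix.mul_one, ← Matrix.map_mul, hUV,
      Matrix.map_one _ (map_zero C) (map_one C), Matrix.mul_smul, Matrix.smul_mul,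
      ← Matrix.map_mul, ← Matrix.map_mul]
  rw [addCompound_eq_coeff_matPolyEquiv, addCompound_eq_coeff_matPolyEquiv, hlift,
    multCompound_mul, multCompound_mul, multCompound_map, multCompound_map, map_mul, map_mul,
    matPolyEquiv_map_C, matPolyEquiv_map_C, coeff_mul_C, coeff_C_mul]

theorem coeff_one_prod_X_mul_C_add_one {ι : Type*} (s : Finset ι) (a : ι → R) :
    (∏ i ∈ s, (X * C (a i) + 1)).coeff 1 = ∑ i ∈ s, a i := by
  classical
  induction s using Finset.induction_on with
  | empty => simp [coeff_one]
  | insert j s hj ih =>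
    rw [Finset.prod_insert hj, Finset.sum_insert hj, add_mul, one_mul, coeff_add, ih, mul_assoc,
      coeff_X_mul, coeff_C_mul, coeff_zero_prod]
    simp

theorem addCompound_diagonal (d : Fin N → R) :
    addCompound k N (diagonal d) = diagonal fun S => ∑ i ∈ S.1, d i := by
  have hlift : (X : R[X]) • (diagonal d).map C + 1 = diagonal fun i => X * C (d i) + 1 := by
    rw [diagonal_map (map_zero C), ← diagonal_smul, ← diagonal_one, diagonal_add]
    rfl
  ext S T
  rw [addCompound, hlift, multCompound_diagonal]
  rcases eq_or_ne S T with rfl | hST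
  · rw [diagonal_apply_eq, diagonal_apply_eq, coeff_one_prod_X_mul_C_add_one]
  · rw [diagonal_apply_ne _ hST, diagonal_apply_ne _ hST, coeff_zero]

end Compound

theorem one_sub_addCompound_posSemidef_iff {N : ℕ} (k : ℕ) {M : Matrix (Fin N) (Fin N) ℝ}
    (hM : M.IsHermitian) :
    (1 - addCompound k N M).PosSemidef ↔
      ∀ S : {s : Finset (Fin N) // s.card = k}, ∑ i ∈ S.1, hM.eigenvalues i ≤ 1 := by
  set U : Matrix (Fin N) (Fin N) ℝ := hM.eigenvectorUnitary.1
  have hU : U * star U = 1 := mem_unitaryGroup_iff.mp hM.eigenvectorUnitary.2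
  have hspec : M = U * diagonal hM.eigenvalues * star U := by
    simpa [Unitary.conjStarAlgAut_apply] using hM.spectral_theorem
  set W := multCompound k N U
  have hstarW : multCompound k N (star U) = star W := by
    simp only [star_eq_conjTranspose, conjTranspose_eq_transpose_of_trivial,
      multCompound_transpose, W]
  have hW : W * star W = 1 := by
    rw [← hstarW, ← multCompound_mul, hU, multCompound_one]
  have hconj : 1 - addCompound k N M =
      W * diagonal (fun S => 1 - ∑ i ∈ S.1, hM.eigenvalues i) * star W := by
    conv_lhs => rw [hspec]
    rw [addCompound_conj _ _ _ hU, addCompound_diagonal, hstarW, ← diagonal_one,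
      ← diagonal_sub, mul_sub, sub_mul, diagonal_one, mul_one, hW]
  rw [hconj, (IsUnit.of_mul_eq_one _ hW).posSemidef_star_right_conjugate_iff,
    posSemidef_diagonal_iff]
  simp only [sub_nonneg]

theorem Matrix.charpoly_fromBlocks_zero₁₁_zero₂₂ {R m n : Type*} [CommRing R] [Fintype m]
    [Fintype n] [DecidableEq m] [DecidableEq n] (A : Matrix m n R) (B : Matrix n m R)
    (h : Fintype.card n ≤ Fintype.card m) :
    (fromBlocks 0 A B 0).charpoly =
      X ^ (Fintype.card m - Fintype.card n) * (B * A).charpoly.comp (X ^ 2) := by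
  have hcomp : (B * A).charpoly.comp (X ^ 2) =
      (scalar n (X ^ 2 : R[X]) - (B * A).map C).det := by
    rw [charpoly, ← coe_compRingHom_apply, RingHom.map_det]
    congr 1
    ext i j : 1
    by_cases hij : i = j <;> simp [hij, Matrix.mul_apply]
  have hmul : fromBlocks (scalar m (X : R[X])) 0 (B.map C) (scalar n X) *
      charmatrix (fromBlocks 0 A B 0) =
      fromBlocks (scalar m (X ^ 2)) (-(X : R[X]) • A.map C) 0
        (scalar n (X ^ 2) - (B * A).map C) := by
    simp only [charmatrix_fromBlocks, fromBlocks_multiply, charmatrix_zero]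
    simp [← smul_eq_diagonal_mul, ← smul_eq_mul_diagonal, pow_two, Matrix.map_mul,
      sub_eq_neg_add, ← diagonal_smul, Pi.smul_def]
  have hdet := congrArg det hmul
  rw [det_mul, det_fromBlocks_zero₁₂, det_fromBlocks_zero₂₁, ← hcomp] at hdet
  simp only [scalar_apply, det_diagonal, Finset.prod_const, Finset.card_univ] at hdet
  refine (isRegular_X_pow (Fintype.card m + Fintype.card n)).left ?_
  dsimp only
  rw [← mul_assoc, ← pow_add, show Fintype.card m + Fintype.card n +
    (Fintype.card m - Fintype.card n) = 2 * Fintype.card m by omega, pow_mul, pow_add, ← hdet,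
    charpoly]

theorem Fintype.exists_equiv_of_map_univ_eq {α β γ : Type*} [Fintype α] [Fintype β]
    {f : α → γ} {g : β → γ} (h : Finset.univ.val.map f = Finset.univ.val.map g) :
    ∃ e : α ≃ β, f = g ∘ e := by
  classical
  have hfiber (c : γ) : Fintype.card {a // f a = c} = Fintype.card {b // g b = c} := by
    have := congrArg (Multiset.count c) h
    simp only [Multiset.count_map, eq_comm (a := c)] at this
    rw [Fintype.card_subtype, Fintype.card_subtype]
    exact this
  let e := fun c => Fintype.equivOfCardEq (hfiber c)
  refine ⟨(Equiv.sigmaFiberEquiv f).symm.trans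
    ((Equiv.sigmaCongrRight e).trans (Equiv.sigmaFiberEquiv g)), funext fun a => ?_⟩
  exact (e (f a) ⟨a, rfl⟩).2.symm

theorem Matrix.IsHermitian.exists_equiv_eigenvalues_eq {ι κ : Type*} [Fintype ι] [DecidableEq ι]
    [Fintype κ] {A : Matrix ι ι ℝ} (hA : A.IsHermitian) {g : κ → ℝ}
    (h : A.charpoly = ∏ i, (X - C (g i))) :
    ∃ e : ι ≃ κ, hA.eigenvalues = g ∘ e := by
  refine Fintype.exists_equiv_of_map_univ_eq ?_
  have := hA.roots_charpoly_eq_eigenvalues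
  rw [h, roots_prod _ _ (Finset.prod_ne_zero_iff.mpr fun i _ => X_sub_C_ne_zero (g i))] at this
  simpa using this.symm

noncomputable def singularValues {m n : ℕ} (x : Matrix (Fin m) (Fin n) ℝ) : Fin n → ℝ :=
  fun j => √((isHermitian_conjTranspose_mul_self x).eigenvalues j)

abbrev hermitianDilation {m n : ℕ} (x : Matrix (Fin m) (Fin n) ℝ) :
    Matrix (Fin (m + n)) (Fin (m + n)) ℝ :=
  (fromBlocks 0 x xᵀ 0).reindex finSumFinEquiv finSumFinEquiv

theorem isHermitian_hermitianDilation {m n : ℕ} (x : Matrix (Fin m) (Fin n) ℝ) :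
    (hermitianDilation x).IsHermitian := by
  rw [IsHermitian, conjTranspose_reindex, fromBlocks_conjTranspose]
  simp [conjTranspose_eq_transpose_of_trivial]

theorem charpoly_hermitianDilation {m n : ℕ} (hmn : n ≤ m) (x : Matrix (Fin m) (Fin n) ℝ) :
    (hermitianDilation x).charpoly = ∏ i, (X - C (Sum.elim (singularValues x)
      (Sum.elim (0 : Fin (m - n) → ℝ) (-singularValues x)) i)) := by
  have hx := isHermitian_conjTranspose_mul_self x
  have hsq (j : Fin n) : X ^ 2 - C (hx.eigenvalues j) =
      (X - C (singularValues x j)) * (X - C (-singularValues x j)) := by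
    rw [← Real.sq_sqrt (eigenvalues_conjTranspose_mul_self_nonneg x j), map_pow, map_neg,
      singularValues]
    ring
  rw [charpoly_reindex, charpoly_fromBlocks_zero₁₁_zero₂₂ _ _ (by simpa using hmn),
    ← conjTranspose_eq_transpose_of_trivial, hx.charpoly_eq, prod_comp]
  simp only [Fintype.card_fin, Fintype.prod_sum_type, Sum.elim_inl, Sum.elim_inr, Pi.zero_apply,
    Pi.neg_apply, map_zero, sub_zero, Finset.prod_const, Finset.card_univ, sub_comp, X_comp,
    C_comp, RCLike.ofReal_real_eq_id, id_eq, hsq, Finset.prod_mul_distrib]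
  ring

theorem forall_card_eq_sum_comp_equiv_le_iff {α β M : Type*} [AddCommMonoid M] [LE M]
    (e : α ≃ β) (g : β → M) (k : ℕ) (c : M) :
    (∀ S : Finset α, S.card = k → ∑ i ∈ S, g (e i) ≤ c) ↔
      ∀ T : Finset β, T.card = k → ∑ i ∈ T, g i ≤ c := by
  refine ⟨fun h T hT => ?_, fun h S hS => ?_⟩
  · simpa using h (T.map e.symm.toEmbedding) (by rwa [Finset.card_map])
  · simpa using h (S.map e.toEmbedding) (by rwa [Finset.card_map])

theorem forall_card_eq_sum_elim_le_iff {α β M : Type*} [AddCommMonoid M] [PartialOrder M]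
    [IsOrderedAddMonoid M] [Fintype α] {a : α → M} {b : β → M} (ha : 0 ≤ a) (hb : b ≤ 0) {k : ℕ}
    (hk : k ≤ Fintype.card α) (c : M) :
    (∀ S : Finset (α ⊕ β), S.card = k → ∑ i ∈ S, Sum.elim a b i ≤ c) ↔
      ∀ s : Finset α, s.card = k → ∑ i ∈ s, a i ≤ c := by
  refine ⟨fun h s hs => ?_, fun h S hS => ?_⟩
  · simpa using h (s.disjSum ∅) (by simpa using hs)
  obtain ⟨s, hSs, -, hs⟩ := Finset.exists_subsuperset_card_eq (Finset.subset_univ S.toLeft)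
    (hS ▸ Finset.card_toLeft_le) (by simpa using hk)
  calc ∑ i ∈ S, Sum.elim a b i
      = ∑ i ∈ S.toLeft, a i + ∑ i ∈ S.toRight, b i :=
        Finset.sum_sum_eq_sum_toLeft_add_sum_toRight _ _
    _ ≤ ∑ i ∈ s, a i + 0 :=
        add_le_add (Finset.sum_le_sum_of_subset_of_nonneg hSs fun i _ _ => ha i)
          (Finset.sum_nonpos fun i _ => hb i)
    _ ≤ c := by rw [add_zero]; exact h s hs

theorem kyFanNorm_le_iff {m n k : ℕ} (hkn : k ≤ n) (x : Matrix (Fin m) (Fin n) ℝ) (c : ℝ) :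
    kyFanNorm k x ≤ c ↔ ∀ s : Finset (Fin n), s.card = k → ∑ i ∈ s, singularValues x i ≤ c := by
  set sums := {t | ∃ s : Finset (Fin n), s.card = k ∧ t = ∑ i ∈ s, singularValues x i}
  have hbdd : BddAbove sums := by
    refine ((Set.finite_range fun s : Finset (Fin n) => ∑ i ∈ s, singularValues x i).subset
      ?_).bddAbove
    rintro _ ⟨s, -, rfl⟩
    exact ⟨s, rfl⟩
  obtain ⟨s, -, hs⟩ := Finset.exists_subset_card_eq (s := (Finset.univ : Finset (Fin n)))
    (by simpa using hkn)
  change sSup sums ≤ c ↔ _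
  rw [csSup_le_iff hbdd ⟨_, s, hs, rfl⟩]
  simp only [sums, Set.mem_ofPred_eq, forall_exists_index, and_imp]
  exact ⟨fun h s hs => h _ s hs rfl, fun h _ s hs ht => ht ▸ h s hs⟩

theorem kyFan_ball_is_spectrahedron_general {m n : ℕ} (hmn : n ≤ m)
    (k : ℕ) (hkn : k ≤ n) :
    {x : Matrix (Fin m) (Fin n) ℝ | kyFanNorm k x ≤ 1} =
      {x : Matrix (Fin m) (Fin n) ℝ |
        (1 - addCompound k (m + n)
          ((Matrix.fromBlocks 0 x xᵀ 0).reindex finSumFinEquiv finSumFinEquiv)).PosSemidef} := by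
  ext x
  have hx := isHermitian_hermitianDilation x
  obtain ⟨e, he⟩ := hx.exists_equiv_eigenvalues_eq (charpoly_hermitianDilation hmn x)
  have hσ : 0 ≤ singularValues x := fun j => Real.sqrt_nonneg _
  have hnonpos : Sum.elim (0 : Fin (m - n) → ℝ) (-singularValues x) ≤ 0 := by
    rintro (i | j)
    · exact le_rfl
    · exact neg_nonpos.2 (hσ j)
  rw [Set.mem_ofPred_eq, Set.mem_ofPred_eq, kyFanNorm_le_iff hkn,
    one_sub_addCompound_posSemidef_iff k hx, he,
    ← forall_card_eq_sum_elim_le_iff hσ hnonpos (by simpa using hkn),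
    ← forall_card_eq_sum_comp_equiv_le_iff e]
  exact ⟨fun h S => h S.1 S.2, fun h S hS => h ⟨S, hS⟩⟩

/-- For `m ≥ n` and `1 ≤ k ≤ n`, the unit ball of the `k`-th Ky Fan norm on
`M_{m×n}(ℝ)` is the spectrahedron `{x : Λᵏ(x̂) ⪯ I}`, where
`x̂ = [[0,x],[xᵀ,0]]` and `Λᵏ` is the derivation (additive compound) action on the
`k`-th exterior power of `ℝ^{m+n}`. -/
theorem kyFan_ball_is_spectrahedron {m n : ℕ} (hmn : n ≤ m) (hn : 1 ≤ n)
    (k : ℕ) (hk1 : 1 ≤ k) (hkn : k ≤ n) :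
    {x : Matrix (Fin m) (Fin n) ℝ | kyFanNorm k x ≤ 1} =
      {x : Matrix (Fin m) (Fin n) ℝ |
        (1 - addCompound k (m + n)
          ((Matrix.fromBlocks 0 x xᵀ 0).reindex finSumFinEquiv finSumFinEquiv)).PosSemidef} :=
  kyFan_ball_is_spectrahedron_general hmn k hkn
end
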